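/- (Proposition 1(ii).) Consider a finite episodic MDP and a linear value-function approximator v̂(s;θ) = θ · x(s) for fixed features x : S → ℝⁿ. Assume that for every deterministic policy π there exists a unique parameter θ*_π ∈ ℝⁿ with ∑_{s∈S} μ_π(s)·(v̂(s;θ*_π) − v_π(s))² = 0. Let θ̃ be a fixed point of approximate value iteration, i.e., with π = Greedy(θ̃), θ̃ minimizes over θ ∈ ℝⁿ the objective ∑_{s∈S} μ_π(s)·(v̂(s;θ) − B*v̂(s;θ̃))². Then v̂(·;θ̃) = v̂(·;θ*_π), i.e., θ̃ is also a fixed point of approximate policy iteration. -/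

import Mathlib

open Matrix BigOperators

/-- Transition matrix of the Markov chain induced by deterministic policy `π`. -/
noncomputable def polMat {S A : Type*} [Fintype S] (p : S → A → S → ℝ) (π : S → A) :
    Matrix S S ℝ := fun s s' => p s (π s) s'

/-- Expected one-step reward vector of deterministic policy `π`. -/
noncomputable def polRew {S A : Type*} (r : S → A → ℝ) (π : S → A) : S → ℝ :=
  fun s => r s (π s)

/-- True value function of deterministic policy `π`: v_π = (I − P_π)⁻¹ r_π. -/
noncomputable def polVal {S A : Type*} [Fintype S] [DecidableEq S]
    (p : S → A → S → ℝ) (r : S → A → ℝ) (π : S → A) : S → ℝ :=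
  (1 - polMat p π)⁻¹ *ᵥ polRew r π

/-- On-policy weights (expected visit counts): μ_π = ν₀ᵀ (I − P_π)⁻¹. -/
noncomputable def polMu {S A : Type*} [Fintype S] [DecidableEq S]
    (p : S → A → S → ℝ) (ν₀ : S → ℝ) (π : S → A) : S → ℝ :=
  ν₀ ᵥ* (1 - polMat p π)⁻¹

/-- Bellman optimality operator: B*v(s) = max_a [r(s,a) + Σ_{s'} p(s'|s,a) v(s')]. -/
noncomputable def bellOpt {S A : Type*} [Fintype S] [Fintype A] [Nonempty A]
    (p : S → A → S → ℝ) (r : S → A → ℝ) (v : S → ℝ) : S → ℝ :=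
  fun s => ⨆ a : A, (r s a + ∑ s', p s a s' * v s')

/-- Linear value-function approximator v̂(s;θ) = θ · x(s). -/
noncomputable def linVhat {S : Type*} [Fintype S] (n : ℕ) (x : S → Fin n → ℝ)
    (θ : Fin n → ℝ) : S → ℝ := fun s => θ ⬝ᵥ x s

/-!
At a greedy fixed point the AVI residual `v̂ − B* v̂` equals `e − P_π e`, where `e = v̂ − v_π` is
the evaluation error, because `v_π = r_π + P_π v_π`. First-order optimality of `θ̃` in the
direction `θ* − θ̃`, together with `v̂(·; θ*) = v_π` on the support of `μ_π`, gives
`⟨e − P_π e, e⟩_μ = 0`. As `μ_π P_π ≤ μ_π` and `P_π` is substochastic, Jensen gives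
`‖P_π e‖_μ ≤ ‖e‖_μ`, hence `‖e − P_π e‖²_μ = ‖P_π e‖²_μ − ‖e‖²_μ + 2 ⟨e − P_π e, e⟩_μ ≤ 0`.
So `e` is `P_π`-harmonic on the support of `μ_π`, a set closed under `P_π`, and transience
(`P_π ^ t → 0`) forces `e = 0` there: `θ̃` has zero evaluation error, so `θ̃ = θ*` by uniqueness.
-/

open Filter Topology

theorem sum_mul_sq_eq_zero_iff {S : Type*} [Fintype S] {μ f : S → ℝ} (hμ : 0 ≤ μ) :
    ∑ s, μ s * f s ^ 2 = 0 ↔ ∀ s, 0 < μ s → f s = 0 := by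
  rw [Finset.sum_eq_zero_iff_of_nonneg fun s _ => mul_nonneg (hμ s) (sq_nonneg _)]
  refine ⟨fun h s hs => by simpa [hs.ne'] using h s (Finset.mem_univ s), fun h s _ => ?_⟩
  rcases (hμ s).eq_or_lt with hzero | hpos
  · simp [← hzero]
  · simp [h s hpos]

theorem sum_mul_mul_eq_zero_of_forall_le {S : Type*} [Fintype S] {μ f g : S → ℝ}
    (h : ∀ t : ℝ, ∑ s, μ s * f s ^ 2 ≤ ∑ s, μ s * (f s + t * g s) ^ 2) :
    ∑ s, μ s * (f s * g s) = 0 := by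
  have hquad : ∀ t : ℝ,
      0 ≤ (∑ s, μ s * g s ^ 2) * (t * t) + 2 * (∑ s, μ s * (f s * g s)) * t + 0 := by
    intro t
    have hexpand : ∑ s, μ s * (f s + t * g s) ^ 2 = ∑ s, μ s * f s ^ 2 +
        ((∑ s, μ s * g s ^ 2) * (t * t) + 2 * (∑ s, μ s * (f s * g s)) * t) := by
      simp only [Finset.sum_mul, Finset.mul_sum, ← Finset.sum_add_distrib]
      exact Finset.sum_congr rfl fun s _ => by ring
    linarith [h t]
  have hdiscr := discrim_le_zero hquad
  rw [discrim, mul_zero, sub_zero] at hdiscr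
  simpa using le_antisymm hdiscr (sq_nonneg _)

theorem sum_mul_linVhat_residual_mul_eq_zero {S : Type*} [Fintype S] {n : ℕ}
    {x : S → Fin n → ℝ} {μ b : S → ℝ} {θ₀ : Fin n → ℝ}
    (hmin : ∀ θ : Fin n → ℝ, ∑ s, μ s * (linVhat n x θ₀ s - b s) ^ 2
      ≤ ∑ s, μ s * (linVhat n x θ s - b s) ^ 2) (θ : Fin n → ℝ) :
    ∑ s, μ s * ((linVhat n x θ₀ s - b s) * (linVhat n x θ₀ s - linVhat n x θ s)) = 0 := by
  refine sum_mul_mul_eq_zero_of_forall_le fun t => (hmin (θ₀ + t • (θ₀ - θ))).trans_eq ?_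
  refine Finset.sum_congr rfl fun s _ => ?_
  simp only [linVhat, add_dotProduct, smul_dotProduct, sub_dotProduct, smul_eq_mul]
  ring

theorem sum_mul_congr_of_pos {S : Type*} [Fintype S] {μ f g : S → ℝ} (hμ : 0 ≤ μ)
    (h : ∀ s, 0 < μ s → f s = g s) : ∑ s, μ s * f s = ∑ s, μ s * g s := by
  refine Finset.sum_congr rfl fun s _ => ?_
  rcases (hμ s).eq_or_lt with hzero | hpos
  · simp [← hzero]
  · rw [h s hpos]

namespace Matrix

variable {S : Type*} [Fintype S] {M : Matrix S S ℝ}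

theorem mulVec_mono_of_nonneg (hM : ∀ i j, 0 ≤ M i j) {u v : S → ℝ} (huv : u ≤ v) :
    M *ᵥ u ≤ M *ᵥ v := fun i =>
  Finset.sum_le_sum fun j _ => mul_le_mul_of_nonneg_left (huv j) (hM i j)

theorem sq_mulVec_le_mulVec_sq (hM : ∀ i j, 0 ≤ M i j) (hrow : ∀ i, ∑ j, M i j ≤ 1)
    (e : S → ℝ) (i : S) : (M *ᵥ e) i ^ 2 ≤ (M *ᵥ (e ^ 2)) i := by
  have hsq : ∀ j, 0 ≤ M i j * e j ^ 2 := fun j => mul_nonneg (hM i j) (sq_nonneg _)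
  calc (M *ᵥ e) i ^ 2 ≤ (∑ j, M i j) * ∑ j, M i j * e j ^ 2 :=
        Finset.sum_sq_le_sum_mul_sum_of_sq_le_mul _ (fun j _ => hM i j) (fun j _ => hsq j)
          fun j _ => by ring_nf; rfl
    _ ≤ ∑ j, M i j * e j ^ 2 :=
        mul_le_of_le_one_left (Finset.sum_nonneg fun j _ => hsq j) (hrow i)
    _ = (M *ᵥ (e ^ 2)) i := rfl

theorem sum_mul_mulVec_sq_le (hM : ∀ i j, 0 ≤ M i j) (hrow : ∀ i, ∑ j, M i j ≤ 1)
    {μ : S → ℝ} (hμ : 0 ≤ μ) (hsub : μ ᵥ* M ≤ μ) (e : S → ℝ) :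
    ∑ i, μ i * (M *ᵥ e) i ^ 2 ≤ ∑ i, μ i * e i ^ 2 :=
  calc ∑ i, μ i * (M *ᵥ e) i ^ 2 ≤ μ ⬝ᵥ (M *ᵥ (e ^ 2)) :=
        Finset.sum_le_sum fun i _ =>
          mul_le_mul_of_nonneg_left (sq_mulVec_le_mulVec_sq hM hrow e i) (hμ i)
    _ = (μ ᵥ* M) ⬝ᵥ (e ^ 2) := dotProduct_mulVec _ _ _
    _ ≤ ∑ i, μ i * e i ^ 2 :=
        Finset.sum_le_sum fun i _ => mul_le_mul_of_nonneg_right (hsub i) (sq_nonneg _)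

theorem sum_mul_sq_sub_mulVec_eq_zero (hM : ∀ i j, 0 ≤ M i j) (hrow : ∀ i, ∑ j, M i j ≤ 1)
    {μ : S → ℝ} (hμ : 0 ≤ μ) (hsub : μ ᵥ* M ≤ μ) {e : S → ℝ}
    (horth : ∑ i, μ i * ((e i - (M *ᵥ e) i) * e i) = 0) :
    ∑ i, μ i * (e i - (M *ᵥ e) i) ^ 2 = 0 := by
  refine le_antisymm ?_ (Finset.sum_nonneg fun i _ => mul_nonneg (hμ i) (sq_nonneg _))
  have hexpand : ∑ i, μ i * (e i - (M *ᵥ e) i) ^ 2 = ∑ i, μ i * (M *ᵥ e) i ^ 2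
      - ∑ i, μ i * e i ^ 2 + 2 * ∑ i, μ i * ((e i - (M *ᵥ e) i) * e i) := by
    rw [Finset.mul_sum, ← Finset.sum_sub_distrib, ← Finset.sum_add_distrib]
    exact Finset.sum_congr rfl fun i _ => by ring
  rw [hexpand, horth]
  linarith [sum_mul_mulVec_sq_le hM hrow hμ hsub e]

theorem pos_of_vecMul_le (hM : ∀ i j, 0 ≤ M i j) {μ : S → ℝ} (hμ : 0 ≤ μ)
    (hsub : μ ᵥ* M ≤ μ) {i j : S} (hi : 0 < μ i) (hij : M i j ≠ 0) : 0 < μ j :=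
  calc 0 < μ i * M i j := mul_pos hi ((hM i j).lt_of_ne' hij)
    _ ≤ (μ ᵥ* M) j := Finset.single_le_sum (f := fun k => μ k * M k j)
        (fun k _ => mul_nonneg (hμ k) (hM k j)) (Finset.mem_univ i)
    _ ≤ μ j := hsub j

variable [DecidableEq S]

theorem eq_zero_of_le_mulVec (hM : ∀ i j, 0 ≤ M i j)
    (hlim : Tendsto (fun t : ℕ => M ^ t) atTop (𝓝 0)) {w : S → ℝ} (hw₀ : 0 ≤ w)
    (hw : w ≤ M *ᵥ w) : w = 0 := by
  have hpow : ∀ t : ℕ, w ≤ (M ^ t) *ᵥ w := by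
    intro t
    induction t with
    | zero => simp
    | succ t ih =>
      calc w ≤ M *ᵥ w := hw
        _ ≤ M *ᵥ ((M ^ t) *ᵥ w) := mulVec_mono_of_nonneg hM ih
        _ = (M ^ (t + 1)) *ᵥ w := by rw [mulVec_mulVec, pow_succ']
  have hlim' : Tendsto (fun t : ℕ => (M ^ t) *ᵥ w) atTop (𝓝 0) := by
    simpa [Function.comp_def] using
      ((continuous_id.matrix_mulVec continuous_const).tendsto 0).comp hlim
  exact le_antisymm (ge_of_tendsto' hlim' hpow) hw₀

theorem eq_zero_on_of_eq_mulVec_on (hM : ∀ i j, 0 ≤ M i j)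
    (hlim : Tendsto (fun t : ℕ => M ^ t) atTop (𝓝 0)) {T : Set S}
    (hT : ∀ i ∈ T, ∀ j, M i j ≠ 0 → j ∈ T) {e : S → ℝ} (he : ∀ i ∈ T, e i = (M *ᵥ e) i) :
    ∀ i ∈ T, e i = 0 := by
  set w : S → ℝ := fun i => |T.indicator e i|
  have hw : w ≤ M *ᵥ w := by
    intro i
    by_cases hi : i ∈ T
    · have hrestrict : (M *ᵥ e) i = (M *ᵥ T.indicator e) i := by
        refine Finset.sum_congr rfl fun j _ => ?_
        by_cases hij : M i j = 0
        · simp [hij]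
        · simp [Set.indicator_of_mem (hT i hi j hij)]
      calc w i = |(M *ᵥ T.indicator e) i| := by
            simp only [w, Set.indicator_of_mem hi, he i hi, hrestrict]
        _ ≤ ∑ j, |M i j * T.indicator e j| := Finset.abs_sum_le_sum_abs _ _
        _ = (M *ᵥ w) i := by simp [mulVec, dotProduct, abs_mul, abs_of_nonneg (hM i _), w]
    · simp only [w, Set.indicator_of_notMem hi, abs_zero]
      exact Finset.sum_nonneg fun j _ => mul_nonneg (hM i j) (abs_nonneg _)
  intro i hi
  simpa [w, hi] using congrFun (eq_zero_of_le_mulVec hM hlim (fun i => abs_nonneg _) hw) i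

theorem inv_one_sub_apply_nonneg (hM : ∀ i j, 0 ≤ M i j)
    (hsum : HasSum (fun t : ℕ => M ^ t) (1 - M)⁻¹) (i j : S) : 0 ≤ (1 - M)⁻¹ i j :=
  (Pi.hasSum.1 (Pi.hasSum.1 hsum i) j).nonneg fun t => pow_apply_nonneg hM t i j

theorem vecMul_inv_one_sub_eq (hsum : HasSum (fun t : ℕ => M ^ t) (1 - M)⁻¹) (ν : S → ℝ) :
    ν ᵥ* (1 - M)⁻¹ = ν + ν ᵥ* (1 - M)⁻¹ ᵥ* M := by
  have hinv : ν ᵥ* (1 - M)⁻¹ ᵥ* (1 - M) = ν := by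
    rw [vecMul_vecMul, ← hsum.tsum_eq, hsum.summable.tsum_pow_mul_one_sub, vecMul_one]
  rw [vecMul_sub, vecMul_one] at hinv
  exact sub_eq_iff_eq_add.1 hinv

theorem inv_one_sub_mulVec_eq (hsum : HasSum (fun t : ℕ => M ^ t) (1 - M)⁻¹) (r : S → ℝ) :
    (1 - M)⁻¹ *ᵥ r = r + M *ᵥ ((1 - M)⁻¹ *ᵥ r) := by
  have hinv : (1 - M) *ᵥ ((1 - M)⁻¹ *ᵥ r) = r := by
    rw [mulVec_mulVec, ← hsum.tsum_eq, hsum.summable.one_sub_mul_tsum_pow, one_mulVec]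
  rw [sub_mulVec, one_mulVec] at hinv
  exact sub_eq_iff_eq_add.1 hinv

end Matrix

theorem bellOpt_eq_of_greedy {S A : Type*} [Fintype S] [Fintype A] [Nonempty A]
    {p : S → A → S → ℝ} {r : S → A → ℝ} {v : S → ℝ} {π : S → A}
    (hgreedy : ∀ s a, r s a + ∑ s', p s a s' * v s' ≤ r s (π s) + ∑ s', p s (π s) s' * v s') :
    bellOpt p r v = polRew r π + polMat p π *ᵥ v :=
  funext fun s => le_antisymm (ciSup_le (hgreedy s))
    (le_ciSup (f := fun a => r s a + ∑ s', p s a s' * v s') (Set.finite_range _).bddAbove (π s))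

section Policy

variable {S A : Type*} [Fintype S] [DecidableEq S] {p : S → A → S → ℝ} {π : S → A}

theorem polMu_nonneg (hp : ∀ s a s', 0 ≤ p s a s') {ν₀ : S → ℝ} (hν₀ : 0 ≤ ν₀)
    (htrans : HasSum (fun t : ℕ => polMat p π ^ t) (1 - polMat p π)⁻¹) :
    0 ≤ polMu p ν₀ π := fun s => Finset.sum_nonneg fun j _ =>
  mul_nonneg (hν₀ j) (inv_one_sub_apply_nonneg (fun i j => hp i (π i) j) htrans j s)

theorem polMu_vecMul_polMat_le {ν₀ : S → ℝ} (hν₀ : 0 ≤ ν₀)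
    (htrans : HasSum (fun t : ℕ => polMat p π ^ t) (1 - polMat p π)⁻¹) :
    polMu p ν₀ π ᵥ* polMat p π ≤ polMu p ν₀ π :=
  (le_add_of_nonneg_left hν₀).trans_eq (vecMul_inv_one_sub_eq htrans ν₀).symm

theorem sub_bellOpt_eq_of_greedy [Fintype A] [Nonempty A] {r : S → A → ℝ} {v : S → ℝ}
    (htrans : HasSum (fun t : ℕ => polMat p π ^ t) (1 - polMat p π)⁻¹)
    (hgreedy : ∀ s a, r s a + ∑ s', p s a s' * v s' ≤ r s (π s) + ∑ s', p s (π s) s' * v s') :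
    v - bellOpt p r v = (v - polVal p r π) - polMat p π *ᵥ (v - polVal p r π) := by
  have hval : polVal p r π = polRew r π + polMat p π *ᵥ polVal p r π :=
    inv_one_sub_mulVec_eq htrans (polRew r π)
  rw [bellOpt_eq_of_greedy hgreedy, mulVec_sub]
  linear_combination hval

end Policy

theorem avi_fixed_point_is_api_fixed_point_general
    {S A : Type*} [Fintype S] [Fintype A] [DecidableEq S] [Nonempty A]
    (n : ℕ) (p : S → A → S → ℝ) (r : S → A → ℝ) (ν₀ : S → ℝ) (x : S → Fin n → ℝ)
    (hp_nonneg : ∀ s a s', 0 ≤ p s a s')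
    (hp_sub : ∀ s a, ∑ s', p s a s' ≤ 1)
    (hν₀_nonneg : ∀ s, 0 ≤ ν₀ s)
    (htrans : ∀ π : S → A, HasSum (fun t : ℕ => polMat p π ^ t) (1 - polMat p π)⁻¹)
    (hzero : ∀ π : S → A, ∃! θ : Fin n → ℝ,
      ∑ s, polMu p ν₀ π s * (linVhat n x θ s - polVal p r π s) ^ 2 = 0)
    (θtil : Fin n → ℝ) (π : S → A)
    (hgreedy : ∀ s a, r s a + ∑ s', p s a s' * linVhat n x θtil s'
      ≤ r s (π s) + ∑ s', p s (π s) s' * linVhat n x θtil s')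
    (hAVIfix : ∀ θ : Fin n → ℝ,
      ∑ s, polMu p ν₀ π s * (linVhat n x θtil s - bellOpt p r (linVhat n x θtil) s) ^ 2
        ≤ ∑ s, polMu p ν₀ π s * (linVhat n x θ s - bellOpt p r (linVhat n x θtil) s) ^ 2) :
    ∀ θstar : Fin n → ℝ,
      (∑ s, polMu p ν₀ π s * (linVhat n x θstar s - polVal p r π s) ^ 2 = 0) →
      linVhat n x θtil = linVhat n x θstar := by
  intro θstar hstar
  have hM : ∀ i j, 0 ≤ polMat p π i j := fun i j => hp_nonneg i (π i) j
  have hμ := polMu_nonneg hp_nonneg hν₀_nonneg (htrans π)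
  have hsub := polMu_vecMul_polMat_le hν₀_nonneg (htrans π)
  have hres := sub_bellOpt_eq_of_greedy (htrans π) hgreedy
  set μ := polMu p ν₀ π
  set M := polMat p π
  set e := linVhat n x θtil - polVal p r π
  have horth : ∑ s, μ s * ((e s - (M *ᵥ e) s) * e s) = 0 := by
    rw [← sum_mul_linVhat_residual_mul_eq_zero hAVIfix θstar]
    refine sum_mul_congr_of_pos hμ fun s hs => ?_
    rw [sub_eq_zero.1 ((sum_mul_sq_eq_zero_iff hμ).1 hstar s hs)]
    exact congrArg (· * e s) (congrFun hres s).symm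
  have hharm : ∀ s ∈ {s | 0 < μ s}, e s = (M *ᵥ e) s := fun s hs => sub_eq_zero.1 <|
    (sum_mul_sq_eq_zero_iff hμ).1 (sum_mul_sq_sub_mulVec_eq_zero hM (fun i => hp_sub i (π i))
      hμ hsub horth) s hs
  have he_zero := eq_zero_on_of_eq_mulVec_on hM (htrans π).summable.tendsto_atTop_zero
    (fun _ hs _ hM' => pos_of_vecMul_le hM hμ hsub hs hM') hharm
  exact congrArg (linVhat n x) ((hzero π).unique ((sum_mul_sq_eq_zero_iff hμ).2 he_zero) hstar)

/-- Proposition 1(ii): in a finite episodic MDP with a linear value-function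
approximator in which, for each deterministic policy, there is a unique parameter
achieving zero on-policy weighted evaluation error, every fixed point of
approximate value iteration is also a fixed point of approximate policy
iteration. -/
theorem avi_fixed_point_is_api_fixed_point
    {S A : Type*} [Fintype S] [Fintype A] [DecidableEq S] [Nonempty A]
    (n : ℕ) (p : S → A → S → ℝ) (r : S → A → ℝ) (ν₀ : S → ℝ) (x : S → Fin n → ℝ)
    (hp_nonneg : ∀ s a s', 0 ≤ p s a s')
    (hp_sub : ∀ s a, ∑ s', p s a s' ≤ 1)
    (hν₀_nonneg : ∀ s, 0 ≤ ν₀ s) (hν₀_sum : ∑ s, ν₀ s = 1)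
    (hunit : ∀ π : S → A, IsUnit (1 - polMat p π))
    (htrans : ∀ π : S → A, HasSum (fun t : ℕ => polMat p π ^ t) (1 - polMat p π)⁻¹)
    (hzero : ∀ π : S → A, ∃! θ : Fin n → ℝ,
      ∑ s, polMu p ν₀ π s * (linVhat n x θ s - polVal p r π s) ^ 2 = 0)
    (θtil : Fin n → ℝ) (π : S → A)
    (hgreedy : ∀ s a, r s a + ∑ s', p s a s' * linVhat n x θtil s'
      ≤ r s (π s) + ∑ s', p s (π s) s' * linVhat n x θtil s')
    (hAVIfix : ∀ θ : Fin n → ℝ,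
      ∑ s, polMu p ν₀ π s * (linVhat n x θtil s - bellOpt p r (linVhat n x θtil) s) ^ 2
        ≤ ∑ s, polMu p ν₀ π s * (linVhat n x θ s - bellOpt p r (linVhat n x θtil) s) ^ 2) :
    ∀ θstar : Fin n → ℝ,
      (∑ s, polMu p ν₀ π s * (linVhat n x θstar s - polVal p r π s) ^ 2 = 0) →
      linVhat n x θtil = linVhat n x θstar :=
  avi_fixed_point_is_api_fixed_point_general n p r ν₀ x hp_nonneg hp_sub hν₀_nonneg htrans hzero
    θtil π hgreedy hAVIfix
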